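/- Let α > 1 and let φ be an analytic self-map of the unit disk D. Then C_φ is an isometry on the harmonic α-Bloch space HB(α) if and only if φ is a rotation. -/

import Mathlib

/-!
Testing the isometry on `f(z) = z + c z̄` gives `|φ(0) + conj (c φ(0))| + (1 + |c|) S = 1 + |c|`
for every `c ∈ ℂ`, where `S = sup (1-|z|²)^α |φ'(z)|`; the choices `c = 0` and
`c = -conj φ(0) / φ(0)` force `φ(0) = 0` and `S = 1`. By Schwarz–Pick,
`(1-|z|²)^α |φ'(z)| ≤ (1-|z|²)^(α-1)`, which for `α > 1` stays below `1` away from `0`, so `S = 1`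
forces `|φ'(0)| = 1`, and the equality case of the Schwarz lemma makes `φ` a rotation.
Conversely, a rotation fixes `0` and preserves the weight `1 - |z|²`.
-/

open Complex Metric Set Filter
noncomputable section

/-- The open unit disk in `ℂ`. -/
def unitDisk : Set ℂ := Metric.ball (0 : ℂ) 1

/-- The set of values `(1-|z|²)^α (|f_z(z)| + |f_z̄(z)|)` for `z` in the unit disk, where the
harmonic function is `f = h + conj g` with `h, g` analytic, so `f_z = h'` and `f_z̄ = conj g'`. -/
def hbSet (α : ℝ) (h g : ℂ → ℂ) : Set ℝ :=
  (fun z => (1 - ‖z‖ ^ 2) ^ α *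
    (‖deriv h z‖ + ‖deriv g z‖)) '' unitDisk

/-- The harmonic α-Bloch seminorm `‖f‖_{HB(α)}` of `f = h + conj g`. -/
def hbSemi (α : ℝ) (h g : ℂ → ℂ) : ℝ := sSup (hbSet α h g)

/-- The harmonic α-Bloch norm `|||f|||_{HB(α)} = |f(0)| + ‖f‖_{HB(α)}` of `f = h + conj g`. -/
def hbNorm (α : ℝ) (h g : ℂ → ℂ) : ℝ :=
  ‖h 0 + (starRingEnd ℂ) (g 0)‖ + hbSemi α h g

/-- An analytic self-map of the unit disk. -/
def IsSelfMap (φ : ℂ → ℂ) : Prop :=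
  DifferentiableOn ℂ φ unitDisk ∧ MapsTo φ unitDisk unitDisk

/-- `f = h + conj g` is a harmonic α-Bloch function: `h, g` analytic on the disk and the
Bloch quantity is bounded. -/
def IsHB (α : ℝ) (h g : ℂ → ℂ) : Prop :=
  DifferentiableOn ℂ h unitDisk ∧ DifferentiableOn ℂ g unitDisk ∧ BddAbove (hbSet α h g)

/-- The composition operator `C_φ` is an isometry on `HB(α)`: `|||f∘φ||| = |||f|||` for every
harmonic α-Bloch function `f = h + conj g` (note `f ∘ φ = h∘φ + conj (g∘φ)`). -/
def IsIsometryOn (α : ℝ) (φ : ℂ → ℂ) : Prop :=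
  ∀ h g : ℂ → ℂ, IsHB α h g → hbNorm α (h ∘ φ) (g ∘ φ) = hbNorm α h g

/-- `φ` is a rotation of the unit disk. -/
def IsRotation (φ : ℂ → ℂ) : Prop :=
  ∃ lam : ℂ, ‖lam‖ = 1 ∧ ∀ z ∈ unitDisk, φ z = lam * z

/-- `τ_φ(z) = (1-|z|²)|φ'(z)| / (1-|φ(z)|²)`. -/
def tauPhi (φ : ℂ → ℂ) (z : ℂ) : ℝ :=
  (1 - ‖z‖ ^ 2) * ‖deriv φ z‖ / (1 - ‖φ z‖ ^ 2)

open scoped ComplexConjugate Pointwise Topology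

lemma mem_unitDisk {z : ℂ} : z ∈ unitDisk ↔ ‖z‖ < 1 := mem_ball_zero_iff

lemma zero_mem_unitDisk : (0 : ℂ) ∈ unitDisk := mem_unitDisk.2 (by simp)

lemma isOpen_unitDisk : IsOpen unitDisk := isOpen_ball

lemma one_sub_sq_norm_pos {z : ℂ} (hz : z ∈ unitDisk) : 0 < 1 - ‖z‖ ^ 2 := by
  have := pow_lt_one₀ (norm_nonneg z) (mem_unitDisk.1 hz) two_ne_zero
  linarith

lemma one_sub_normSq_pos {z : ℂ} (hz : z ∈ unitDisk) : 0 < 1 - normSq z :=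
  Complex.sq_norm z ▸ one_sub_sq_norm_pos hz

def mobius (a w : ℂ) : ℂ := (a - w) / (1 - conj a * w)

lemma mobius_zero (a : ℂ) : mobius a 0 = a := by simp [mobius]

lemma mobius_self (a : ℂ) : mobius a a = 0 := by simp [mobius]

lemma one_sub_conj_mul_ne_zero {a w : ℂ} (ha : a ∈ unitDisk) (hw : w ∈ unitDisk) :
    1 - conj a * w ≠ 0 := by
  have hlt : ‖conj a * w‖ < 1 := by
    rw [norm_mul, RCLike.norm_conj]
    exact mul_lt_one_of_nonneg_of_lt_one_left (norm_nonneg a) (mem_unitDisk.1 ha)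
      (mem_unitDisk.1 hw).le
  exact sub_ne_zero.2 fun h => by simp [← h] at hlt

lemma normSq_one_sub_conj_mul_sub_normSq_sub (a w : ℂ) :
    normSq (1 - conj a * w) - normSq (a - w) = (1 - normSq a) * (1 - normSq w) := by
  simp only [normSq_apply, sub_re, sub_im, mul_re, mul_im, one_re, one_im, conj_re, conj_im]
  ring

lemma mapsTo_mobius {a : ℂ} (ha : a ∈ unitDisk) : MapsTo (mobius a) unitDisk unitDisk := by
  intro w hw
  have hd := one_sub_conj_mul_ne_zero ha hw
  rw [mem_unitDisk, mobius, norm_div, div_lt_one (norm_pos_iff.2 hd),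
    ← sq_lt_sq₀ (norm_nonneg _) (norm_nonneg _), Complex.sq_norm, Complex.sq_norm]
  have := normSq_one_sub_conj_mul_sub_normSq_sub a w
  nlinarith [mul_pos (one_sub_normSq_pos ha) (one_sub_normSq_pos hw)]

lemma hasDerivAt_mobius {a w : ℂ} (hw : 1 - conj a * w ≠ 0) :
    HasDerivAt (mobius a) ((normSq a - 1) / (1 - conj a * w) ^ 2) w := by
  have hnum : HasDerivAt (fun z => a - z) (-1) w := by
    simpa using (hasDerivAt_id w).const_sub a
  have hden : HasDerivAt (fun z => 1 - conj a * z) (-conj a) w := by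
    simpa using ((hasDerivAt_id w).const_mul (conj a)).const_sub 1
  refine (hnum.div hden hw).congr_deriv ?_
  rw [normSq_eq_conj_mul_self]
  ring

lemma differentiableOn_mobius {a : ℂ} (ha : a ∈ unitDisk) :
    DifferentiableOn ℂ (mobius a) unitDisk := fun _ hw =>
  (hasDerivAt_mobius (one_sub_conj_mul_ne_zero ha hw)).differentiableAt.differentiableWithinAt

theorem IsSelfMap.schwarz_pick {φ : ℂ → ℂ} (hφ : IsSelfMap φ) {a : ℂ} (ha : a ∈ unitDisk) :
    (1 - ‖a‖ ^ 2) * ‖deriv φ a‖ ≤ 1 - ‖φ a‖ ^ 2 := by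
  obtain ⟨hdφ, hmaps⟩ := hφ
  set b := φ a
  have hb : b ∈ unitDisk := hmaps ha
  set g := mobius b ∘ φ ∘ mobius a
  have hna := one_sub_normSq_pos ha
  have hnb := one_sub_normSq_pos hb
  -- `g` fixes `0`, so the Schwarz lemma bounds `g'(0)`, which the chain rule computes.
  have hg : HasDerivAt g (((1 - normSq a) / (1 - normSq b) : ℝ) * deriv φ a) 0 := by
    have hφa : HasDerivAt φ (deriv φ a) (mobius a 0) := by
      rw [mobius_zero]
      exact (hdφ.differentiableAt (isOpen_unitDisk.mem_nhds ha)).hasDerivAt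
    have hbb : 1 - conj b * b ≠ 0 := one_sub_conj_mul_ne_zero hb hb
    refine ((hasDerivAt_mobius hbb).comp_of_eq 0
      (hφa.comp 0 (hasDerivAt_mobius (w := 0) (by simp))) (by simp [b, mobius_zero])).congr_deriv ?_
    rw [← normSq_eq_conj_mul_self] at hbb ⊢
    push_cast
    field_simp
    ring
  have hschwarz : ‖deriv g 0‖ ≤ 1 := by
    refine Complex.norm_deriv_le_one_of_mapsTo_ball
      ((differentiableOn_mobius hb).comp (hdφ.comp (differentiableOn_mobius ha) (mapsTo_mobius ha))
        (hmaps.comp (mapsTo_mobius ha))) ?_ one_pos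
    have hg0 : g 0 = 0 := by
      simp only [g, Function.comp_apply, mobius_zero]
      exact mobius_self b
    rw [hg0]
    exact ((mapsTo_mobius hb).comp (hmaps.comp (mapsTo_mobius ha))).mono_right
      ball_subset_closedBall
  rw [hg.deriv, norm_mul, Complex.norm_real, Real.norm_of_nonneg (by positivity),
    div_mul_eq_mul_div, div_le_one hnb, ← Complex.sq_norm, ← Complex.sq_norm] at hschwarz
  linarith

theorem IsSelfMap.rpow_mul_norm_deriv_le {φ : ℂ → ℂ} (hφ : IsSelfMap φ) (α : ℝ) {z : ℂ}
    (hz : z ∈ unitDisk) : (1 - ‖z‖ ^ 2) ^ α * ‖deriv φ z‖ ≤ (1 - ‖z‖ ^ 2) ^ (α - 1) := by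
  have hpos := one_sub_sq_norm_pos hz
  have hw : 0 ≤ (1 - ‖z‖ ^ 2) ^ (α - 1) := by positivity
  calc (1 - ‖z‖ ^ 2) ^ α * ‖deriv φ z‖
      = (1 - ‖z‖ ^ 2) ^ (α - 1) * ((1 - ‖z‖ ^ 2) * ‖deriv φ z‖) := by
        rw [Real.rpow_sub_one hpos.ne']
        field_simp
    _ ≤ (1 - ‖z‖ ^ 2) ^ (α - 1) * (1 - ‖φ z‖ ^ 2) := by gcongr; exact hφ.schwarz_pick hz
    _ ≤ (1 - ‖z‖ ^ 2) ^ (α - 1) := mul_le_of_le_one_right hw (by nlinarith [norm_nonneg (φ z)])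

lemma hbSet_zero (α : ℝ) (h : ℂ → ℂ) :
    hbSet α h (fun _ => 0) = (fun z => (1 - ‖z‖ ^ 2) ^ α * ‖deriv h z‖) '' unitDisk := by
  simp only [hbSet, deriv_const, norm_zero, add_zero]

lemma hbSet_const_mul (α : ℝ) (h : ℂ → ℂ) (c : ℂ) :
    hbSet α h (fun z => c * h z) = (1 + ‖c‖) • hbSet α h (fun _ => 0) := by
  rw [hbSet_zero, hbSet, ← Set.image_smul, Set.image_image]
  refine Set.image_congr fun z _ => ?_
  rw [deriv_const_mul_field', norm_mul, smul_eq_mul]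
  ring

lemma hbSemi_const_mul (α : ℝ) (h : ℂ → ℂ) (c : ℂ) :
    hbSemi α h (fun z => c * h z) = (1 + ‖c‖) * hbSemi α h (fun _ => 0) := by
  rw [hbSemi, hbSemi, hbSet_const_mul, Real.sSup_smul_of_nonneg (by positivity), smul_eq_mul]

lemma isGreatest_hbSet_id {α : ℝ} (hα : 0 ≤ α) : IsGreatest (hbSet α id (fun _ => 0)) 1 := by
  rw [hbSet_zero]
  refine ⟨⟨0, zero_mem_unitDisk, by simp⟩, ?_⟩
  rintro _ ⟨z, hz, rfl⟩
  have hpos := one_sub_sq_norm_pos hz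
  simpa using Real.rpow_le_one hpos.le (by linarith [sq_nonneg ‖z‖]) hα

lemma hbSemi_id {α : ℝ} (hα : 0 ≤ α) : hbSemi α id (fun _ => 0) = 1 :=
  (isGreatest_hbSet_id hα).csSup_eq

lemma isHB_id_const_mul {α : ℝ} (hα : 0 ≤ α) (c : ℂ) : IsHB α id (fun z => c * id z) := by
  refine ⟨differentiableOn_id, (differentiable_id.const_mul c).differentiableOn, ?_⟩
  rw [hbSet_const_mul]
  exact (isGreatest_hbSet_id hα).bddAbove.smul_of_nonneg (by positivity)

theorem IsIsometryOn.norm_add_conj_const_mul {α : ℝ} {φ : ℂ → ℂ} (hiso : IsIsometryOn α φ)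
    (hα : 0 ≤ α) (c : ℂ) :
    ‖φ 0 + conj (c * φ 0)‖ + (1 + ‖c‖) * hbSemi α φ (fun _ => 0) = 1 + ‖c‖ := by
  have h := hiso id (fun z => c * id z) (isHB_id_const_mul hα c)
  change hbNorm α φ (fun z => c * φ z) = hbNorm α id (fun z => c * id z) at h
  rw [hbNorm, hbNorm, hbSemi_const_mul, hbSemi_const_mul, hbSemi_id hα] at h
  simpa using h

theorem IsIsometryOn.map_zero {α : ℝ} {φ : ℂ → ℂ} (hiso : IsIsometryOn α φ) (hα : 0 ≤ α) :
    φ 0 = 0 := by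
  by_contra hne
  have h₀ : ‖φ 0‖ + hbSemi α φ (fun _ => 0) = 1 := by
    simpa using hiso.norm_add_conj_const_mul hα 0
  -- `c` has norm `1` and makes `φ 0 + conj (c * φ 0)` vanish.
  have h₁ := hiso.norm_add_conj_const_mul hα (-conj (φ 0) / φ 0)
  rw [div_mul_cancel₀ _ hne, map_neg, conj_conj, add_neg_cancel, norm_zero, zero_add, norm_div,
    norm_neg, RCLike.norm_conj, div_self (norm_ne_zero_iff.2 hne)] at h₁
  exact hne (norm_eq_zero.1 (by linarith))

theorem IsIsometryOn.hbSemi_eq_one {α : ℝ} {φ : ℂ → ℂ} (hiso : IsIsometryOn α φ) (hα : 0 ≤ α) :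
    hbSemi α φ (fun _ => 0) = 1 := by
  simpa [hiso.map_zero hα] using hiso.norm_add_conj_const_mul hα 0

lemma sSup_image_unitDisk_lt_one {F : ℂ → ℝ} {β : ℝ} (hβ : 0 < β)
    (hF : ∀ z ∈ unitDisk, F z ≤ (1 - ‖z‖ ^ 2) ^ β) (hcont : ContinuousAt F 0) (hF0 : F 0 < 1) :
    sSup (F '' unitDisk) < 1 := by
  obtain ⟨c, hFc, hc⟩ := exists_between hF0
  obtain ⟨δ, hδ, hnear⟩ :=
    Metric.eventually_nhds_iff.1 (hcont.eventually_lt continuousAt_const hFc)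
  set r := min δ 1
  have hr : 0 < r := lt_min hδ one_pos
  have hr1 : r ^ 2 ≤ 1 := pow_le_one₀ hr.le (min_le_right _ _)
  have hfar : (1 - r ^ 2) ^ β < 1 :=
    Real.rpow_lt_one (by linarith) (by nlinarith) hβ
  refine (csSup_le (Set.image_nonempty.2 ⟨0, zero_mem_unitDisk⟩) ?_).trans_lt (max_lt hc hfar)
  rintro _ ⟨z, hz, rfl⟩
  rcases lt_or_ge ‖z‖ r with hzr | hzr
  · exact le_max_of_le_left (hnear (by simpa using hzr.trans_le (min_le_left _ _))).le
  · refine le_max_of_le_right ((hF z hz).trans ?_)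
    exact Real.rpow_le_rpow (one_sub_sq_norm_pos hz).le (by nlinarith) hβ.le

theorem IsSelfMap.hbSemi_lt_one {α : ℝ} {φ : ℂ → ℂ} (hφ : IsSelfMap φ) (hα : 1 < α)
    (h : ‖deriv φ 0‖ < 1) : hbSemi α φ (fun _ => 0) < 1 := by
  have hderiv : ContinuousAt (deriv φ) 0 :=
    ((hφ.1.analyticOnNhd isOpen_unitDisk).deriv 0 zero_mem_unitDisk).continuousAt
  have hweight : ContinuousAt (fun z : ℂ => (1 - ‖z‖ ^ 2) ^ α) 0 :=
    (continuousAt_const.sub (continuous_norm.continuousAt.pow 2)).rpow_const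
      (Or.inr (by linarith))
  rw [hbSemi, hbSet_zero]
  exact sSup_image_unitDisk_lt_one (sub_pos.2 hα) (fun z hz => hφ.rpow_mul_norm_deriv_le α hz)
    (hweight.mul hderiv.norm) (by simpa using h)

theorem IsIsometryOn.isRotation {α : ℝ} {φ : ℂ → ℂ} (hiso : IsIsometryOn α φ)
    (hφ : IsSelfMap φ) (hα : 1 < α) : IsRotation φ := by
  have h0 := hiso.map_zero (by linarith)
  have hmaps : MapsTo φ (ball 0 1) (closedBall (φ 0) 1) := by
    rw [h0]
    exact hφ.2.mono_right ball_subset_closedBall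
  have hle : ‖deriv φ 0‖ ≤ 1 := Complex.norm_deriv_le_one_of_mapsTo_ball hφ.1 hmaps one_pos
  have hge : 1 ≤ ‖deriv φ 0‖ := not_lt.1 fun hlt =>
    (hφ.hbSemi_lt_one hα hlt).ne (hiso.hbSemi_eq_one (by linarith))
  obtain ⟨C, hC, hφC⟩ := Complex.affine_of_mapsTo_ball_of_exists_norm_dslope_eq_div' hφ.1 hmaps
    ⟨0, mem_ball_self one_pos, by rw [dslope_same, div_one]; exact le_antisymm hle hge⟩
  exact ⟨C, by simpa using hC, fun z hz => by simpa [h0, mul_comm] using hφC hz⟩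

lemma image_const_mul_unitDisk {c : ℂ} (hc : ‖c‖ = 1) :
    (fun z => c * z) '' unitDisk = unitDisk := by
  have hc0 : c ≠ 0 := norm_ne_zero_iff.1 (by simp [hc])
  simp_rw [← smul_eq_mul]
  rw [Set.image_smul, unitDisk, _root_.smul_ball hc0, hc, smul_zero, one_mul]

theorem IsRotation.isIsometryOn {φ : ℂ → ℂ} (hrot : IsRotation φ) (α : ℝ) :
    IsIsometryOn α φ := by
  obtain ⟨c, hc, hφ⟩ := hrot
  intro h g _
  have hderiv : ∀ f : ℂ → ℂ, ∀ z ∈ unitDisk, ‖deriv (f ∘ φ) z‖ = ‖deriv f (c * z)‖ := by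
    intro f z hz
    have hf : f ∘ φ =ᶠ[𝓝 z] fun w => f (c * w) := by
      filter_upwards [isOpen_unitDisk.mem_nhds hz] with w hw
      simp [hφ w hw]
    rw [hf.deriv_eq, deriv_comp_mul_left, norm_smul, hc, one_mul]
  have hset : hbSet α (h ∘ φ) (g ∘ φ) = hbSet α h g := by
    rw [hbSet, hbSet]
    conv_rhs => rw [← image_const_mul_unitDisk hc, Set.image_image]
    refine Set.image_congr fun z hz => ?_
    rw [hderiv h z hz, hderiv g z hz, norm_mul, hc, one_mul]
  have h0 : φ 0 = 0 := by simpa using hφ 0 zero_mem_unitDisk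
  simp only [hbNorm, hbSemi, hset, Function.comp_apply, h0]

/-- for `α > 1` and `φ` an analytic self-map of the disk, `C_φ` is an isometry on
`HB(α)` if and only if `φ` is a rotation. -/
theorem stmt10 (α : ℝ) (hα : 1 < α) (φ : ℂ → ℂ) (hφ : IsSelfMap φ) :
    IsIsometryOn α φ ↔ IsRotation φ :=
  ⟨fun hiso => hiso.isRotation hφ hα, fun hrot => hrot.isIsometryOn α⟩
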